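/- If R ∈ A⊗A⊗A satisfies R¹⊗aR²⊗R³ = R¹⊗R²⊗R³a for all a ∈ A, R¹R²⊗R³ = 1⊗1 and R²⊗R³R¹ = 1⊗1, then R is invertible in the algebra A⊗A⊗A, with inverse R²⊗R¹⊗R³ (i.e. r²R¹⊗r¹R²⊗r³R³ = 1⊗1⊗1 = R¹r²⊗R²r¹⊗R³r³, where r is a second copy of R). -/

import Mathlib

/-!
Write `R = ∑ xᵢ ⊗ yᵢ ⊗ zᵢ` and `S = ∑ yᵢ ⊗ xᵢ ⊗ zᵢ`. The centrality condition says that `a`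
placed in the middle slot of `R` may be moved to the right of the last slot. Feeding this into
`R² ⊗ R³R¹ = 1 ⊗ 1` gives the identity `∑ yᵢ ⊗ zᵢ a xᵢ = a ⊗ 1`. Expanding `S * R`, the
centrality condition turns the `j`-th row of the double sum into `∑ᵢ yⱼxᵢ ⊗ yᵢ ⊗ zⱼzᵢxⱼ`;
summing over `j` first, the identity collapses it to `∑ᵢ zᵢxᵢ ⊗ yᵢ ⊗ 1`, which is `1` by the
normalisation again. `R * S` is handled in the same way, with the roles of the first two slots
exchanged.
-/

open TensorProduct

section Cyclic

variable (k A : Type*) [CommRing k] [Ring A] [Algebra k A]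

noncomputable def cyclicMul : A ⊗[k] A ⊗[k] A →ₗ[k] A ⊗[k] A :=
  (LinearMap.mul' k A ∘ₗ (TensorProduct.comm k A A).toLinearMap).lTensor A ∘ₗ
    (TensorProduct.assoc k A A A).toLinearMap ∘ₗ (TensorProduct.comm k A A).toLinearMap.rTensor A

@[simp]
theorem cyclicMul_tmul (u v w : A) : cyclicMul k A (u ⊗ₜ v ⊗ₜ w) = v ⊗ₜ (w * u) := rfl

end Cyclic

section RMatrix

variable {k A ι : Type*} [CommRing k] [Ring A] [Algebra k A] {s : Finset ι} {x y z : ι → A}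

theorem sum_mul_tmul_eq_sum_tmul_mul
    (hcen : ∀ a : A, ∑ i ∈ s, x i ⊗ₜ[k] (a * y i) ⊗ₜ[k] z i
      = ∑ i ∈ s, x i ⊗ₜ[k] y i ⊗ₜ[k] (z i * a)) (a : A) :
    ∑ i ∈ s, (a * y i) ⊗ₜ[k] x i ⊗ₜ[k] z i = ∑ i ∈ s, y i ⊗ₜ[k] x i ⊗ₜ[k] (z i * a) := by
  simpa only [map_sum, LinearMap.rTensor_tmul, LinearEquiv.coe_coe, comm_tmul] using
    congrArg ((TensorProduct.comm k A A).toLinearMap.rTensor A) (hcen a)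

theorem sum_mul_tmul_mul_eq_tmul_one
    (hcen : ∀ a : A, ∑ i ∈ s, x i ⊗ₜ[k] (a * y i) ⊗ₜ[k] z i
      = ∑ i ∈ s, x i ⊗ₜ[k] y i ⊗ₜ[k] (z i * a))
    (hnorm : ∑ i ∈ s, y i ⊗ₜ[k] (z i * x i) = (1 : A) ⊗ₜ[k] (1 : A)) (a u : A) :
    ∑ i ∈ s, (y i * u) ⊗ₜ[k] (z i * (a * x i)) = (a * u) ⊗ₜ[k] (1 : A) := by
  have hmove : ∑ i ∈ s, (a * y i) ⊗ₜ[k] (z i * x i) = ∑ i ∈ s, y i ⊗ₜ[k] (z i * (a * x i)) := by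
    simpa only [map_sum, cyclicMul_tmul, mul_assoc] using congrArg (cyclicMul k A) (hcen a)
  have hstar : ∑ i ∈ s, y i ⊗ₜ[k] (z i * (a * x i)) = a ⊗ₜ[k] (1 : A) := by
    rw [← hmove]
    simpa only [Finset.mul_sum, Algebra.TensorProduct.tmul_mul_tmul, mul_one, one_mul] using
      congrArg ((a ⊗ₜ[k] (1 : A)) * ·) hnorm
  simpa only [Finset.sum_mul, Algebra.TensorProduct.tmul_mul_tmul, mul_one] using
    congrArg (· * (u ⊗ₜ[k] (1 : A))) hstar

theorem tmul_mul_sum_eq_sum_mul_tmul_mul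
    (hcen : ∀ a : A, ∑ i ∈ s, x i ⊗ₜ[k] (a * y i) ⊗ₜ[k] z i
      = ∑ i ∈ s, x i ⊗ₜ[k] y i ⊗ₜ[k] (z i * a)) (u v w : A) :
    (u ⊗ₜ[k] v ⊗ₜ[k] w) * ∑ i ∈ s, x i ⊗ₜ[k] y i ⊗ₜ[k] z i
      = ∑ i ∈ s, (u * x i) ⊗ₜ[k] y i ⊗ₜ[k] (w * (z i * v)) := by
  calc (u ⊗ₜ[k] v ⊗ₜ[k] w) * ∑ i ∈ s, x i ⊗ₜ[k] y i ⊗ₜ[k] z i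
      = (u ⊗ₜ[k] (1 : A) ⊗ₜ[k] w) * ∑ i ∈ s, x i ⊗ₜ[k] (v * y i) ⊗ₜ[k] z i := by
        simp only [Finset.mul_sum, Algebra.TensorProduct.tmul_mul_tmul, one_mul]
    _ = (u ⊗ₜ[k] (1 : A) ⊗ₜ[k] w) * ∑ i ∈ s, x i ⊗ₜ[k] y i ⊗ₜ[k] (z i * v) := by rw [hcen]
    _ = ∑ i ∈ s, (u * x i) ⊗ₜ[k] y i ⊗ₜ[k] (w * (z i * v)) := by
        simp only [Finset.mul_sum, Algebra.TensorProduct.tmul_mul_tmul, one_mul]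

theorem tmul_mul_sum_eq_sum_tmul_mul_tmul_mul
    (hcen : ∀ a : A, ∑ i ∈ s, x i ⊗ₜ[k] (a * y i) ⊗ₜ[k] z i
      = ∑ i ∈ s, x i ⊗ₜ[k] y i ⊗ₜ[k] (z i * a)) (u v w : A) :
    (u ⊗ₜ[k] v ⊗ₜ[k] w) * ∑ i ∈ s, y i ⊗ₜ[k] x i ⊗ₜ[k] z i
      = ∑ i ∈ s, y i ⊗ₜ[k] (v * x i) ⊗ₜ[k] (w * (z i * u)) := by
  calc (u ⊗ₜ[k] v ⊗ₜ[k] w) * ∑ i ∈ s, y i ⊗ₜ[k] x i ⊗ₜ[k] z i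
      = ((1 : A) ⊗ₜ[k] v ⊗ₜ[k] w) * ∑ i ∈ s, (u * y i) ⊗ₜ[k] x i ⊗ₜ[k] z i := by
        simp only [Finset.mul_sum, Algebra.TensorProduct.tmul_mul_tmul, one_mul]
    _ = ((1 : A) ⊗ₜ[k] v ⊗ₜ[k] w) * ∑ i ∈ s, y i ⊗ₜ[k] x i ⊗ₜ[k] (z i * u) := by
        rw [sum_mul_tmul_eq_sum_tmul_mul hcen]
    _ = ∑ i ∈ s, y i ⊗ₜ[k] (v * x i) ⊗ₜ[k] (w * (z i * u)) := by
        simp only [Finset.mul_sum, Algebra.TensorProduct.tmul_mul_tmul, one_mul]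

end RMatrix

theorem R_matrix_invertible_with_inverse_flip
    (k A : Type*) [CommRing k] [Ring A] [Algebra k A]
    (ι : Type*) (s : Finset ι) (x y z : ι → A)
    (hcen : ∀ a : A,
      ∑ i ∈ s, x i ⊗ₜ[k] (a * y i) ⊗ₜ[k] z i
        = ∑ i ∈ s, x i ⊗ₜ[k] y i ⊗ₜ[k] (z i * a))
    (hnorm2 : ∑ i ∈ s, y i ⊗ₜ[k] (z i * x i) = (1 : A) ⊗ₜ[k] (1 : A)) :
    ((∑ j ∈ s, y j ⊗ₜ[k] x j ⊗ₜ[k] z j) * (∑ i ∈ s, x i ⊗ₜ[k] y i ⊗ₜ[k] z i)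
        = (1 : A ⊗[k] A ⊗[k] A)) ∧
    ((∑ i ∈ s, x i ⊗ₜ[k] y i ⊗ₜ[k] z i) * (∑ j ∈ s, y j ⊗ₜ[k] x j ⊗ₜ[k] z j)
        = (1 : A ⊗[k] A ⊗[k] A)) := by
  have hnorm2' : ∑ i ∈ s, (z i * x i) ⊗ₜ[k] y i = (1 : A) ⊗ₜ[k] (1 : A) := by
    simpa only [map_sum, comm_tmul] using congrArg (TensorProduct.comm k A A) hnorm2
  have hcollapse := sum_mul_tmul_mul_eq_tmul_one hcen hnorm2
  constructor
  · rw [Finset.sum_mul, Finset.sum_congr rfl fun j _ =>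
      tmul_mul_sum_eq_sum_mul_tmul_mul hcen (y j) (x j) (z j), Finset.sum_comm]
    calc _ = ∑ i ∈ s, (z i * x i) ⊗ₜ[k] y i ⊗ₜ[k] (1 : A) := Finset.sum_congr rfl fun i _ => by
          simpa only [map_sum, LinearMap.rTensor_tmul, LinearMap.flip_apply, mk_apply] using
            congrArg (((mk k A A).flip (y i)).rTensor A) (hcollapse (z i) (x i))
      _ = 1 := by rw [← sum_tmul, hnorm2']; rfl
  · rw [Finset.sum_mul, Finset.sum_congr rfl fun i _ =>
      tmul_mul_sum_eq_sum_tmul_mul_tmul_mul hcen (x i) (y i) (z i), Finset.sum_comm]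
    calc _ = ∑ j ∈ s, y j ⊗ₜ[k] (z j * x j) ⊗ₜ[k] (1 : A) := Finset.sum_congr rfl fun j _ => by
          simpa only [map_sum, LinearMap.rTensor_tmul, mk_apply] using
            congrArg ((mk k A A (y j)).rTensor A) (hcollapse (z j) (x j))
      _ = 1 := by rw [← sum_tmul, hnorm2]; rfl
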